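/- Let M be a length-one ℤ[t]-module of exponent 2ⁿ, let σ be an involution of ℤ[t], and let b : M × M → ℚ[t]/ℤ[t] be a nonsingular σ-sesquilinear linking form on M. Then for every submodule N of M one has N̄ = N^⊥⊥, where N̄ is the closure of N. -/

import Mathlib

noncomputable instance : Algebra (Polynomial ℤ) (Polynomial ℚ) :=
  (Polynomial.mapRingHom (Int.castRingHom ℚ)).toAlgebra

/-- The `ℤ[t]`-module `ℚ[t]/ℤ[t]`. -/
noncomputable abbrev QtZt : Type :=
  Polynomial ℚ ⧸ LinearMap.range (Algebra.linearMap (Polynomial ℤ) (Polynomial ℚ))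

/-- An `R`-module `M` has *length one*. -/
def IsLengthOne (R M : Type*) [CommRing R] [AddCommGroup M] [Module R M] : Prop :=
  ∃ (k l : ℕ) (f : (Fin k → R) →ₗ[R] (Fin l → R)) (g : (Fin l → R) →ₗ[R] M),
    Function.Injective f ∧ Function.Surjective g ∧ LinearMap.range f = LinearMap.ker g

/-- A nonsingular `σ`-sesquilinear linking form on a `ℤ[t]`-module `M`, with values in
`ℚ[t]/ℤ[t]`.  Here `σ` is an involution of `ℤ[t]` and `τ` is the induced additive
involution `σ̄` of `ℚ[t]/ℤ[t]`.  Nonsingularity is stated as bijectivity of the adjoint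
`x ↦ (y ↦ b x y) : M → M^∧`. -/
structure LinkingForm (σ : Polynomial ℤ ≃+* Polynomial ℤ) (τ : QtZt →+ QtZt)
    (M : Type) [AddCommGroup M] [Module (Polynomial ℤ) M] where
  b : M → M → QtZt
  add_left : ∀ x x' y, b (x + x') y = b x y + b x' y
  add_right : ∀ x y y', b x (y + y') = b x y + b x y'
  smul_right : ∀ (p : Polynomial ℤ) (x y : M), b x (p • y) = p • b x y
  smul_left : ∀ (p : Polynomial ℤ) (x y : M), b (p • x) y = σ p • b x y
  symm : ∀ x y, b x y = τ (b y x)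
  nondegen : ∀ x, (∀ y, b x y = 0) → x = 0
  adj_surj : ∀ φ : M →ₗ[Polynomial ℤ] QtZt, ∃ x, ∀ y, b x y = φ y

namespace LinkingForm

variable {σ : Polynomial ℤ ≃+* Polynomial ℤ} {τ : QtZt →+ QtZt}
  {M : Type} [AddCommGroup M] [Module (Polynomial ℤ) M]

lemma b_zero_left (L : LinkingForm σ τ M) (y : M) : L.b 0 y = 0 := by
  have h := L.add_left 0 0 y
  rw [add_zero] at h
  exact (left_eq_add.mp h)

/-- The orthogonal complement `X^⊥ = {y ∈ M : b(y,x) = 0 for all x ∈ X}`. -/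
def perp (L : LinkingForm σ τ M) (X : Submodule (Polynomial ℤ) M) :
    Submodule (Polynomial ℤ) M where
  carrier := {y | ∀ x ∈ X, L.b y x = 0}
  zero_mem' := fun x _ => L.b_zero_left x
  add_mem' := by
    intro a b ha hb x hx
    rw [L.add_left, ha x hx, hb x hx, add_zero]
  smul_mem' := by
    intro r a ha x hx
    rw [L.smul_left, ha x hx, smul_zero]

end LinkingForm

lemma prime_two_polyInt : Prime (2 : Polynomial ℤ) := by
  rw [show (2 : Polynomial ℤ) = Polynomial.C 2 by simp]
  exact Polynomial.prime_C_iff.mpr Int.prime_two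

lemma span_two_isPrime : (Ideal.span {(2 : Polynomial ℤ)}).IsPrime :=
  (Ideal.span_singleton_prime (by norm_num)).mpr prime_two_polyInt

/-- The closure `N̄ = {x ∈ M : p • x ∈ N for some p ∈ ℤ[t] with p ∉ 2ℤ[t]}`. -/
def Submodule.closure' {M : Type*} [AddCommGroup M] [Module (Polynomial ℤ) M]
    (N : Submodule (Polynomial ℤ) M) : Submodule (Polynomial ℤ) M where
  carrier := {x | ∃ p : Polynomial ℤ, p ∉ Ideal.span {(2 : Polynomial ℤ)} ∧ p • x ∈ N}
  zero_mem' := by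
    refine ⟨1, fun h => prime_two_polyInt.not_unit
      (isUnit_of_dvd_one (Ideal.mem_span_singleton.mp h)), by simp⟩
  add_mem' := by
    rintro a b ⟨p, hp, hpa⟩ ⟨q, hq, hqb⟩
    refine ⟨p * q, fun h => ?_, ?_⟩
    · rcases span_two_isPrime.mem_or_mem h with h' | h'
      · exact hp h'
      · exact hq h'
    · rw [smul_add]
      exact N.add_mem
        (by rw [mul_comm, mul_smul]; exact N.smul_mem q hpa)
        (by rw [mul_smul]; exact N.smul_mem p hqb)
  smul_mem' := by
    rintro r a ⟨p, hp, hpa⟩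
    exact ⟨p, hp, by rw [smul_comm]; exact N.smul_mem r hpa⟩

/-!
Closure is always inside `N^⊥⊥`: if `p • x ∈ N` with `p` odd, then for `y ∈ N^⊥` the value `b(y, x)`
is killed by `p` and by `2ⁿ`, and such an element of `ℚ[t]/ℤ[t]` vanishes.

Conversely, if `x ∉ N̄`, no odd `p` kills the image of `x` in the finitely generated module `M/N`,
which has exponent `2ⁿ`. Localizing a presentation `ℤ[t]^k ↠ M/N` at the prime `(2)` lands over a
discrete valuation ring, where the relevant submodule is free and contains `2ⁿ` times everything;
its dual basis, precomposed with multiplication by `2ⁿ`, yields (after clearing denominators) a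
functional `M/N → ℤ[t]/2ⁿ` not vanishing on `x`. Composed with `ℤ[t]/2ⁿ ↪ ℚ[t]/ℤ[t]`, `r ↦ r/2ⁿ`,
and represented as `b(y, -)` by nonsingularity, it produces `y ∈ N^⊥` with `b(x, y) ≠ 0`.
-/

section PrimeLocalization

variable {R : Type*} [CommRing R] [IsDomain R] {p : R} [hp : Fact (Prime p)]

instance Ideal.isPrime_span_singleton_of_fact : (Ideal.span {p}).IsPrime :=
  (Ideal.span_singleton_prime hp.out.ne_zero).mpr hp.out

theorem Localization.AtPrime.prime_algebraMap_span :
    Prime (algebraMap R (Localization.AtPrime (Ideal.span {p})) p) := by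
  have hmax := IsLocalization.AtPrime.map_eq_maximalIdeal (Ideal.span {p})
    (Localization.AtPrime (Ideal.span {p}))
  rw [Ideal.map_span, Set.image_singleton] at hmax
  have : (Ideal.span {algebraMap R (Localization.AtPrime (Ideal.span {p})) p}).IsPrime :=
    hmax ▸ (IsLocalRing.maximalIdeal.isMaximal _).isPrime
  refine (Ideal.span_singleton_prime ?_).mp this
  exact (map_ne_zero_iff _ (FaithfulSMul.algebraMap_injective _ _)).mpr hp.out.ne_zero

theorem Localization.AtPrime.associated_pow_algebraMap_span [WfDvdMonoid R]
    {d : Localization.AtPrime (Ideal.span {p})} (hd : d ≠ 0) :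
    ∃ k : ℕ, Associated (algebraMap R _ p ^ k) d := by
  obtain ⟨r, s, rfl⟩ := IsLocalization.exists_mk'_eq (Ideal.span {p}).primeCompl d
  have hr : r ≠ 0 := by rintro rfl; simp at hd
  obtain ⟨k, r', hpr', rfl⟩ := WfDvdMonoid.max_power_factor hr hp.out.irreducible
  have hr' : r' ∈ (Ideal.span {p}).primeCompl := by
    simpa [Ideal.mem_primeCompl_iff, Ideal.mem_span_singleton] using hpr'
  refine ⟨k, ?_⟩
  rw [← IsLocalization.mul_mk'_eq_mk'_of_mul, map_pow]
  exact associated_mul_unit_right _ _ ((IsLocalization.AtPrime.isUnit_mk'_iff _ _ _ _).mpr hr')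

instance Localization.AtPrime.isDiscreteValuationRing_span [WfDvdMonoid R] :
    IsDiscreteValuationRing (Localization.AtPrime (Ideal.span {p})) :=
  .ofHasUnitMulPowIrreducibleFactorization
    ⟨_, prime_algebraMap_span.irreducible, associated_pow_algebraMap_span⟩

theorem Localization.AtPrime.pow_dvd_of_algebraMap_dvd {n : ℕ} {r : R}
    (h : algebraMap R (Localization.AtPrime (Ideal.span {p})) (p ^ n) ∣ algebraMap R _ r) :
    p ^ n ∣ r := by
  obtain ⟨d, hd⟩ := h
  obtain ⟨a, s, rfl⟩ := IsLocalization.exists_mk'_eq (Ideal.span {p}).primeCompl d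
  rw [IsLocalization.mul_mk'_eq_mk'_of_mul, eq_comm, IsLocalization.mk'_eq_iff_eq_mul,
    ← map_mul, (FaithfulSMul.algebraMap_injective _ _).eq_iff] at hd
  have hs : ¬ p ∣ s := fun h => s.2 (Ideal.mem_span_singleton.mpr h)
  exact hp.out.pow_dvd_of_dvd_mul_left n hs ⟨a, by rw [mul_comm, ← hd]⟩

end PrimeLocalization

theorem Submodule.exists_linearMap_not_dvd_of_smul_mem {D F : Type*} [CommRing D] [IsDomain D]
    [AddCommGroup F] [Module D F] [Module.IsTorsionFree D F] (W : Submodule D F)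
    [Module.Free D W] [Module.Finite D W] {q : D} (hq : q ≠ 0) (hqW : ∀ m : F, q • m ∈ W)
    {v : F} (hv : v ∉ W) : ∃ θ : F →ₗ[D] D, (∀ w ∈ W, q ∣ θ w) ∧ ¬ q ∣ θ v := by
  let b := Module.Free.chooseBasis D W
  let mulQ : F →ₗ[D] W := LinearMap.codRestrict W (q • LinearMap.id) hqW
  by_contra! h
  have hdvd (i) : q ∣ b.coord i (mulQ v) := by
    refine h (b.coord i ∘ₗ mulQ) fun w hw => ⟨b.coord i ⟨w, hw⟩, ?_⟩
    rw [LinearMap.comp_apply, show mulQ w = q • ⟨w, hw⟩ from rfl, map_smul, smul_eq_mul]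
  choose c hc using hdvd
  have hqv : q • v = q • ∑ i, c i • (b i : F) := by
    calc q • v = ((mulQ v : W) : F) := rfl
      _ = ∑ i, b.coord i (mulQ v) • (b i : F) := by
        simp only [Module.Basis.coord_apply, ← Submodule.coe_smul, ← Submodule.coe_sum, b.sum_repr]
      _ = q • ∑ i, c i • (b i : F) := by simp [hc, Finset.smul_sum, mul_smul]
  rw [smul_right_injective F hq hqv] at hv
  exact hv (W.sum_mem fun i _ => W.smul_mem _ (b i).2)

theorem IsLocalization.exists_smul_eq_algebraMap_comp {R D : Type*} [CommRing R] [CommRing D]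
    [Algebra R D] (S : Submonoid R) [IsLocalization S D] {ι : Type*} [Finite ι]
    (φ : (ι → R) →ₗ[R] D) :
    ∃ (s : S) (u : (ι → R) →ₗ[R] R), (s : R) • φ = Algebra.linearMap R D ∘ₗ u := by
  classical
  obtain ⟨s, hs⟩ := exist_integer_multiples_of_finite S fun i => φ (Pi.single i 1)
  choose c hc using hs
  refine ⟨s, (Pi.basisFun R ι).constr R c, (Pi.basisFun R ι).ext fun i => ?_⟩
  rw [LinearMap.comp_apply, Module.Basis.constr_basis, Algebra.linearMap_apply, hc,
    Pi.basisFun_apply, LinearMap.smul_apply]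

section Separation

variable {R : Type*} [CommRing R] [IsDomain R] [WfDvdMonoid R] {p : R} [hp : Fact (Prime p)]

theorem Submodule.exists_linearMap_pi_not_dvd {k n : ℕ} (W : Submodule R (Fin k → R))
    (hW : ∀ z, p ^ n • z ∈ W) {v : Fin k → R} (hv : ∀ s ∉ Ideal.span {p}, s • v ∉ W) :
    ∃ u : (Fin k → R) →ₗ[R] R, (∀ w ∈ W, p ^ n ∣ u w) ∧ ¬ p ^ n ∣ u v := by
  let S := (Ideal.span {p}).primeCompl
  let D := Localization.AtPrime (Ideal.span {p})
  let ι : (Fin k → R) →ₗ[R] (Fin k → D) := .pi fun i => Algebra.linearMap R D ∘ₗ .proj i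
  let WD := W.localized' D S ι
  have hιW : ∀ w ∈ W, ι w ∈ WD := fun w hw => ⟨w, hw, 1, IsLocalizedModule.mk'_one S ι w⟩
  have hWD : ∀ m, algebraMap R D (p ^ n) • m ∈ WD := by
    intro m
    obtain ⟨⟨z, s⟩, rfl⟩ := IsLocalizedModule.mk'_surjective S ι m
    refine ⟨p ^ n • z, hW z, s, ?_⟩
    rw [algebraMap_smul, Function.uncurry_apply_pair, IsLocalizedModule.mk'_smul]
  have hvD : ι v ∉ WD := by
    rintro ⟨w, hw, s, hws⟩
    rw [IsLocalizedModule.mk'_eq_iff, Submonoid.smul_def, ← map_smul] at hws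
    obtain ⟨c, hc⟩ := (IsLocalizedModule.eq_iff_exists S ι).mp hws
    refine hv (c * s) (c * s).2 ?_
    rw [mul_smul, ← Submonoid.smul_def, ← hc]
    exact W.smul_mem _ hw
  obtain ⟨θ, hθW, hθv⟩ := WD.exists_linearMap_not_dvd_of_smul_mem
    (by simp [hp.out.ne_zero]) hWD hvD
  obtain ⟨s, u, hu⟩ := IsLocalization.exists_smul_eq_algebraMap_comp S (θ.restrictScalars R ∘ₗ ι)
  have hu' (w) : algebraMap R D (u w) = algebraMap R D s * θ (ι w) := by
    rw [← Algebra.smul_def]; exact (LinearMap.congr_fun hu w).symm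
  refine ⟨u, fun w hw =>
    Localization.AtPrime.pow_dvd_of_algebraMap_dvd ?_, fun h => hθv ?_⟩
  · rw [hu']
    exact dvd_mul_of_dvd_right (hθW _ (hιW w hw)) _
  · have := map_dvd (algebraMap R D) h
    rwa [hu', IsUnit.dvd_mul_left (IsLocalization.map_units D s)] at this

theorem Module.exists_linearMap_quotient_span_pow_ne_zero {M : Type*} [AddCommGroup M]
    [Module R M] [Module.Finite R M] {n : ℕ} (hM : ∀ x : M, p ^ n • x = 0) {x : M}
    (hx : ∀ s ∉ Ideal.span {p}, s • x ≠ 0) :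
    ∃ φ : M →ₗ[R] R ⧸ Ideal.span {p ^ n}, φ x ≠ 0 := by
  obtain ⟨k, g, hg⟩ := Module.Finite.exists_fin' R M
  obtain ⟨v, rfl⟩ := hg x
  obtain ⟨u, hu, huv⟩ := (LinearMap.ker g).exists_linearMap_pi_not_dvd
    (fun z => by rw [LinearMap.mem_ker, map_smul, hM]) (v := v)
    fun s hs h => hx s hs (by rw [← map_smul]; exact h)
  let ψ := (Ideal.span {p ^ n}).mkQ ∘ₗ u
  have hψ : LinearMap.ker g ≤ LinearMap.ker ψ := fun w hw => by
    simpa [ψ, Ideal.Quotient.eq_zero_iff_dvd] using hu w hw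
  refine ⟨(LinearMap.ker g).liftQ ψ hψ ∘ₗ (g.quotKerEquivOfSurjective hg).symm, ?_⟩
  have hv : (g.quotKerEquivOfSurjective hg).symm (g v) = Submodule.Quotient.mk v := by
    rw [LinearEquiv.symm_apply_eq, LinearMap.quotKerEquivOfSurjective_apply_mk]
  simpa [hv, ψ, Ideal.Quotient.eq_zero_iff_dvd] using huv

end Separation

namespace QtZt

noncomputable def divTwoPow (n : ℕ) : Polynomial ℤ →ₗ[Polynomial ℤ] QtZt :=
  Submodule.mkQ _ ∘ₗ LinearMap.mulLeft (Polynomial ℤ) (Polynomial.C ((2 : ℚ) ^ n)⁻¹) ∘ₗ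
    Algebra.linearMap (Polynomial ℤ) (Polynomial ℚ)

theorem inv_mul_algebraMap_two_pow (n : ℕ) :
    Polynomial.C ((2 : ℚ) ^ n)⁻¹ * algebraMap (Polynomial ℤ) (Polynomial ℚ) (2 ^ n) = 1 := by
  rw [map_pow, map_ofNat, ← Polynomial.C_ofNat, ← Polynomial.C_pow, ← Polynomial.C_mul,
    inv_mul_cancel₀ (by positivity), Polynomial.C_1]

theorem divTwoPow_eq_zero_iff {n : ℕ} {r : Polynomial ℤ} : divTwoPow n r = 0 ↔ 2 ^ n ∣ r := by
  have hinj : Function.Injective (algebraMap (Polynomial ℤ) (Polynomial ℚ)) :=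
    Polynomial.map_injective _ Int.cast_injective
  simp only [divTwoPow, LinearMap.comp_apply, Submodule.mkQ_apply, Submodule.Quotient.mk_eq_zero,
    LinearMap.mem_range, Algebra.linearMap_apply, LinearMap.mulLeft_apply]
  constructor
  · rintro ⟨a, ha⟩
    refine ⟨a, hinj ?_⟩
    rw [map_mul, ha, ← mul_assoc, mul_comm _ (Polynomial.C _), inv_mul_algebraMap_two_pow, one_mul]
  · rintro ⟨a, rfl⟩
    exact ⟨a, by rw [map_mul, ← mul_assoc, inv_mul_algebraMap_two_pow, one_mul]⟩

theorem ker_divTwoPow (n : ℕ) : LinearMap.ker (divTwoPow n) = Ideal.span {2 ^ n} := by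
  ext r
  rw [LinearMap.mem_ker, divTwoPow_eq_zero_iff, Ideal.mem_span_singleton]

theorem exists_divTwoPow_eq {n : ℕ} {c : QtZt} (h : (2 : Polynomial ℤ) ^ n • c = 0) :
    ∃ r, divTwoPow n r = c := by
  obtain ⟨q, rfl⟩ := Submodule.Quotient.mk_surjective _ c
  rw [← Submodule.Quotient.mk_smul, Submodule.Quotient.mk_eq_zero] at h
  obtain ⟨a, ha⟩ := h
  refine ⟨a, ?_⟩
  simp only [divTwoPow, LinearMap.comp_apply, Submodule.mkQ_apply, Algebra.linearMap_apply,
    LinearMap.mulLeft_apply]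
  rw [← Algebra.linearMap_apply, ha, Algebra.smul_def, ← mul_assoc, inv_mul_algebraMap_two_pow,
    one_mul]

noncomputable def ofQuotTwoPow (n : ℕ) :
    (Polynomial ℤ ⧸ Ideal.span {(2 : Polynomial ℤ) ^ n}) →ₗ[Polynomial ℤ] QtZt :=
  (Ideal.span {(2 : Polynomial ℤ) ^ n}).liftQ (divTwoPow n) (ker_divTwoPow n).ge

theorem ofQuotTwoPow_injective (n : ℕ) : Function.Injective (ofQuotTwoPow n) :=
  LinearMap.ker_eq_bot.mp (Submodule.ker_liftQ_eq_bot' _ _ (ker_divTwoPow n).symm)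

end QtZt

theorem IsLengthOne.finite {R M : Type*} [CommRing R] [AddCommGroup M] [Module R M]
    (h : IsLengthOne R M) : Module.Finite R M := by
  obtain ⟨_, _, _, g, _, hg, _⟩ := h
  exact Module.Finite.of_surjective g hg

instance : Fact (Prime (2 : Polynomial ℤ)) := ⟨prime_two_polyInt⟩

namespace LinkingForm

variable {σ : Polynomial ℤ ≃+* Polynomial ℤ} {τ : QtZt →+ QtZt}
  {M : Type} [AddCommGroup M] [Module (Polynomial ℤ) M] (L : LinkingForm σ τ M)

theorem b_zero_right (x : M) : L.b x 0 = 0 := by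
  simpa using L.smul_right 0 x 0

theorem b_eq_zero_symm {x y : M} (h : L.b x y = 0) : L.b y x = 0 := by
  rw [L.symm, h, map_zero]

theorem closure'_le_perp_perp {n : ℕ} (hexp : ∀ x : M, (2 : Polynomial ℤ) ^ n • x = 0)
    (N : Submodule (Polynomial ℤ) M) : N.closure' ≤ L.perp (L.perp N) := by
  rintro x ⟨s, hs, hsx⟩ y hy
  refine L.b_eq_zero_symm ?_
  obtain ⟨a, ha⟩ := QtZt.exists_divTwoPow_eq (n := n) (c := L.b y x)
    (by rw [← L.smul_right, hexp, L.b_zero_right])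
  have hsa : 2 ^ n ∣ s * a := by
    rw [← QtZt.divTwoPow_eq_zero_iff, ← smul_eq_mul, map_smul, ha, ← L.smul_right]
    exact hy _ hsx
  rw [← ha, QtZt.divTwoPow_eq_zero_iff]
  exact prime_two_polyInt.pow_dvd_of_dvd_mul_left n
    (fun h => hs (Ideal.mem_span_singleton.mpr h)) hsa

theorem apply_eq_zero_of_mem_perp_perp {N : Submodule (Polynomial ℤ) M} {x : M}
    (hx : x ∈ L.perp (L.perp N)) (φ : M →ₗ[Polynomial ℤ] QtZt) (hφ : ∀ z ∈ N, φ z = 0) :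
    φ x = 0 := by
  obtain ⟨y, hy⟩ := L.adj_surj φ
  rw [← hy]
  exact L.b_eq_zero_symm (hx y fun z hz => (hy z).trans (hφ z hz))

end LinkingForm

theorem closure_eq_perp_perp_general
    (M : Type) [AddCommGroup M] [Module (Polynomial ℤ) M]
    (n : ℕ) (hM : IsLengthOne (Polynomial ℤ) M)
    (hexp : ∀ x : M, (2 : Polynomial ℤ) ^ n • x = 0)
    (σ : Polynomial ℤ ≃+* Polynomial ℤ)
    (τ : QtZt →+ QtZt)
    (L : LinkingForm σ τ M)
    (N : Submodule (Polynomial ℤ) M) :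
    N.closure' = L.perp (L.perp N) := by
  have := hM.finite
  refine le_antisymm (L.closure'_le_perp_perp hexp N) fun x hx => ?_
  by_contra hxN
  have hexpQ (z : M ⧸ N) : (2 : Polynomial ℤ) ^ n • z = 0 := by
    obtain ⟨z, rfl⟩ := N.mkQ_surjective z
    rw [← map_smul, hexp, map_zero]
  have hxQ : ∀ s ∉ Ideal.span {(2 : Polynomial ℤ)}, s • N.mkQ x ≠ 0 := fun s hs h =>
    hxN ⟨s, hs, by rwa [← map_smul, Submodule.mkQ_apply, Submodule.Quotient.mk_eq_zero] at h⟩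
  obtain ⟨φ, hφx⟩ := Module.exists_linearMap_quotient_span_pow_ne_zero hexpQ hxQ
  refine hφx (QtZt.ofQuotTwoPow_injective n ?_)
  rw [map_zero]
  exact L.apply_eq_zero_of_mem_perp_perp hx (QtZt.ofQuotTwoPow n ∘ₗ φ ∘ₗ N.mkQ) fun z hz => by
    simp [(Submodule.Quotient.mk_eq_zero N).mpr hz]

/-- Let `M` be a length-one `ℤ[t]`-module of exponent `2ⁿ`, `σ` an involution of
`ℤ[t]` (extending to `σQ` on `ℚ[t]` and inducing `τ` on `ℚ[t]/ℤ[t]`), and `L` a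
nonsingular `σ`-sesquilinear linking form on `M`.  Then for every submodule `N` of
`M` one has `N̄ = N^⊥⊥`. -/
theorem closure_eq_perp_perp
    (M : Type) [AddCommGroup M] [Module (Polynomial ℤ) M]
    (n : ℕ) (hM : IsLengthOne (Polynomial ℤ) M)
    (hexp : ∀ x : M, (2 : Polynomial ℤ) ^ n • x = 0)
    (σ : Polynomial ℤ ≃+* Polynomial ℤ) (hσ : ∀ p, σ (σ p) = p)
    (σQ : Polynomial ℚ ≃+* Polynomial ℚ)
    (hσQ : ∀ p : Polynomial ℤ, σQ (algebraMap (Polynomial ℤ) (Polynomial ℚ) p) =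
      algebraMap (Polynomial ℤ) (Polynomial ℚ) (σ p))
    (τ : QtZt →+ QtZt)
    (hτ : ∀ x : Polynomial ℚ, τ (Submodule.Quotient.mk x) = Submodule.Quotient.mk (σQ x))
    (L : LinkingForm σ τ M)
    (N : Submodule (Polynomial ℤ) M) :
    N.closure' = L.perp (L.perp N) :=
  closure_eq_perp_perp_general M n hM hexp σ τ L N
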